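/- Let (ε_ℓ)_{ℓ ≥ 0} be a sequence of continuous controls such that for each ℓ the pair (ε_ℓ, ε_{ℓ+1}) satisfies the implicit monotonic update equation ε_{ℓ+1}(t) − ε_ℓ(t) = (θ/β) · ( 2 Im⟨χ̃_ℓ(t), μ̃ ψ̃_{ℓ+1}(t)⟩ − 2 Im⟨χ̂_ℓ(t), μ̂ ψ̂_{ℓ+1}(t)⟩ − β (ε_{ℓ+1}(t) + ε_ℓ(t)) ) for all t ∈ [0,T], with θ > 0. Then the sequence (J(ε_ℓ))_{ℓ ≥ 0} is nondecreasing; since it is also bounded above (by 4), it converges. -/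

import Mathlib

noncomputable section

open Matrix

/-- `ψ` solves the bilinear Schrödinger equation
`i ψ'(t) = (H + ε(t) μ) ψ(t)` on `[0, T]` with initial state `ψ₀`. -/
def IsSchrodSol {n : ℕ} (H μ : Matrix (Fin n) (Fin n) ℂ) (ε : ℝ → ℝ)
    (ψ₀ : EuclideanSpace ℂ (Fin n)) (T : ℝ) (ψ : ℝ → EuclideanSpace ℂ (Fin n)) : Prop :=
  ψ 0 = ψ₀ ∧ ∀ t ∈ Set.Icc (0 : ℝ) T,
    HasDerivAt ψ ((-Complex.I) • (Matrix.toEuclideanLin (H + (ε t : ℂ) • μ) (ψ t))) t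

/-- `χ` solves the adjoint equation `i χ'(t) = (H + ε(t) μ) χ(t)` on `[0, T]`
with terminal state `χ(T) = χT`. -/
def IsSchrodAdjSol {n : ℕ} (H μ : Matrix (Fin n) (Fin n) ℂ) (ε : ℝ → ℝ)
    (χT : EuclideanSpace ℂ (Fin n)) (T : ℝ) (χ : ℝ → EuclideanSpace ℂ (Fin n)) : Prop :=
  χ T = χT ∧ ∀ t ∈ Set.Icc (0 : ℝ) T,
    HasDerivAt χ ((-Complex.I) • (Matrix.toEuclideanLin (H + (ε t : ℂ) • μ) (χ t))) t

/-- The rank-one observable `O_{ψ₁} : x ↦ ⟨ψ₁, x⟩ ψ₁`. -/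
def rankOne {n : ℕ} (ψ₁ x : EuclideanSpace ℂ (Fin n)) : EuclideanSpace ℂ (Fin n) :=
  (inner ℂ ψ₁ x : ℂ) • ψ₁

/-- The selectivity functional
`J(ε) = ⟨ψ̃(T) − ψ̂(T), O_{ψ₁}(ψ̃(T) − ψ̂(T))⟩ − β ∫₀ᵀ ε(t)² dt`. -/
def Jfun {n : ℕ} (T β : ℝ) (ψ₁ : EuclideanSpace ℂ (Fin n)) (ε : ℝ → ℝ)
    (ψt ψh : ℝ → EuclideanSpace ℂ (Fin n)) : ℝ :=
  (inner ℂ (ψt T - ψh T) (rankOne ψ₁ (ψt T - ψh T)) : ℂ).re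
    - β * ∫ t in (0:ℝ)..T, (ε t) ^ 2

/-!
Write `Δ = ψ̃ - ψ̂`. Along two Schrödinger flows whose Hermitian generators differ by
`(ε' - ε) μ`, the pairing `⟨χ, ψ⟩` has derivative `-i (ε' - ε) ⟨χ, μ ψ⟩`; with `ε' = ε` this is
conservation of the norm, which gives `J ≤ |⟨ψ₁, Δ(T)⟩|² ≤ 4`. Pairing the adjoint states of
`ε_ℓ`, whose terminal value is `O_{ψ₁} Δ_ℓ(T)`, with the states of `ε_{ℓ+1}` yields
`J(ε_{ℓ+1}) - J(ε_ℓ) = |⟨ψ₁, Δ_{ℓ+1}(T) - Δ_ℓ(T)⟩|² + ∫ (ε_{ℓ+1} - ε_ℓ) G`, where `G` is the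
bracket of the update equation. The update says `ε_{ℓ+1} - ε_ℓ = (θ/β) G`, so the integrand is
`(θ/β) G² ≥ 0`.
-/

section SchrodingerPairing

variable {n : ℕ}

/-- The dynamics common to `IsSchrodSol` and `IsSchrodAdjSol`, with no boundary condition. -/
def SolvesSchrod (H μ : Matrix (Fin n) (Fin n) ℂ) (ε : ℝ → ℝ) (T : ℝ)
    (ψ : ℝ → EuclideanSpace ℂ (Fin n)) : Prop :=
  ∀ t ∈ Set.Icc (0 : ℝ) T,
    HasDerivAt ψ ((-Complex.I) • (toEuclideanLin (H + (ε t : ℂ) • μ) (ψ t))) t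

lemma SolvesSchrod.continuousOn {H μ : Matrix (Fin n) (Fin n) ℂ} {ε : ℝ → ℝ} {T : ℝ}
    {ψ : ℝ → EuclideanSpace ℂ (Fin n)} (h : SolvesSchrod H μ ε T ψ) :
    ContinuousOn ψ (Set.Icc 0 T) :=
  fun t ht => (h t ht).continuousAt.continuousWithinAt

lemma Matrix.IsHermitian.add_ofReal_smul {H μ : Matrix (Fin n) (Fin n) ℂ} (hH : H.IsHermitian)
    (hμ : μ.IsHermitian) (c : ℝ) : (H + (c : ℂ) • μ).IsHermitian :=
  hH.add (by simp [Matrix.IsHermitian, Matrix.conjTranspose_smul, hμ.eq])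

lemma hasDerivAt_inner_of_schrod {A B : Matrix (Fin n) (Fin n) ℂ} (hA : A.IsHermitian)
    {χ ψ : ℝ → EuclideanSpace ℂ (Fin n)} {t : ℝ}
    (hχ : HasDerivAt χ ((-Complex.I) • (toEuclideanLin A (χ t))) t)
    (hψ : HasDerivAt ψ ((-Complex.I) • (toEuclideanLin B (ψ t))) t) :
    HasDerivAt (fun s => inner ℂ (χ s) (ψ s))
      ((-Complex.I) * inner ℂ (χ t) (toEuclideanLin (B - A) (ψ t))) t := by
  refine (hχ.inner ℂ hψ).congr_deriv ?_
  rw [inner_smul_right, inner_smul_left, isSymmetric_toEuclideanLin_iff.mpr hA, map_sub,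
    LinearMap.sub_apply, inner_sub_right, map_neg, Complex.conj_I]
  ring

lemma intervalIntegrable_mul_im_inner {T : ℝ} (hT : 0 ≤ T) {f : ℝ → ℝ} (hf : Continuous f)
    (μ : Matrix (Fin n) (Fin n) ℂ) {χ ψ : ℝ → EuclideanSpace ℂ (Fin n)}
    (hχ : ContinuousOn χ (Set.Icc 0 T)) (hψ : ContinuousOn ψ (Set.Icc 0 T)) :
    IntervalIntegrable (fun t => f t * (inner ℂ (χ t) (toEuclideanLin μ (ψ t))).im)
      MeasureTheory.volume 0 T := by
  refine ContinuousOn.intervalIntegrable ?_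
  rw [Set.uIcc_of_le hT]
  exact hf.continuousOn.mul (Complex.continuous_im.comp_continuousOn
    (hχ.inner ((LinearMap.continuous_of_finiteDimensional _).comp_continuousOn hψ)))

variable {T : ℝ} {H μ : Matrix (Fin n) (Fin n) ℂ} {ε₁ ε₂ : ℝ → ℝ}
  {χ ψ : ℝ → EuclideanSpace ℂ (Fin n)}

lemma SolvesSchrod.re_inner_sub_re_inner (hT : 0 ≤ T) (hH : H.IsHermitian)
    (hμ : μ.IsHermitian) (hε₁ : Continuous ε₁) (hε₂ : Continuous ε₂)
    (hχ : SolvesSchrod H μ ε₁ T χ) (hψ : SolvesSchrod H μ ε₂ T ψ) :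
    (inner ℂ (χ T) (ψ T)).re - (inner ℂ (χ 0) (ψ 0)).re
      = ∫ t in (0 : ℝ)..T, (ε₂ t - ε₁ t) * (inner ℂ (χ t) (toEuclideanLin μ (ψ t))).im := by
  refine (intervalIntegral.integral_eq_sub_of_hasDerivAt
    (f := fun s => (inner ℂ (χ s) (ψ s)).re) (fun t ht => ?_)
    (intervalIntegrable_mul_im_inner hT (f := fun t => ε₂ t - ε₁ t) (hε₂.sub hε₁) μ
      hχ.continuousOn hψ.continuousOn)).symm
  rw [Set.uIcc_of_le hT] at ht
  have hBA : H + (ε₂ t : ℂ) • μ - (H + (ε₁ t : ℂ) • μ) = ((ε₂ t - ε₁ t : ℝ) : ℂ) • μ := by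
    push_cast
    rw [add_sub_add_left_eq_sub, sub_smul]
  have hderiv := hasDerivAt_inner_of_schrod (hH.add_ofReal_smul hμ (ε₁ t)) (hχ t ht) (hψ t ht)
  rw [hBA, _root_.map_smul, LinearMap.smul_apply, inner_smul_right] at hderiv
  refine (Complex.reCLM.hasFDerivAt.comp_hasDerivAt t hderiv).congr_deriv ?_
  simp [Complex.mul_re]

lemma SolvesSchrod.norm_eq (hT : 0 ≤ T) (hH : H.IsHermitian) (hμ : μ.IsHermitian)
    (hε : Continuous ε₁) (hψ : SolvesSchrod H μ ε₁ T ψ) : ‖ψ T‖ = ‖ψ 0‖ := by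
  have h := hψ.re_inner_sub_re_inner hT hH hμ hε hε hψ
  simp only [sub_self, zero_mul, intervalIntegral.integral_zero, sub_eq_zero] at h
  have hsq : ‖ψ T‖ ^ 2 = ‖ψ 0‖ ^ 2 := by
    rw [← inner_self_eq_norm_sq (𝕜 := ℂ), ← inner_self_eq_norm_sq (𝕜 := ℂ)]
    exact h
  exact (pow_left_inj₀ (norm_nonneg _) (norm_nonneg _) two_ne_zero).mp hsq

lemma IsSchrodSol.norm_eq (hT : 0 ≤ T) (hH : H.IsHermitian) (hμ : μ.IsHermitian)
    (hε : Continuous ε₁) {ψ₀ : EuclideanSpace ℂ (Fin n)} (hψ : IsSchrodSol H μ ε₁ ψ₀ T ψ) :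
    ‖ψ T‖ = ‖ψ₀‖ := by
  rw [SolvesSchrod.norm_eq hT hH hμ hε hψ.2, hψ.1]

lemma SolvesSchrod.re_inner_sub_eq_integral (hT : 0 ≤ T) (hH : H.IsHermitian)
    (hμ : μ.IsHermitian) (hε₁ : Continuous ε₁) (hε₂ : Continuous ε₂)
    {ψ' : ℝ → EuclideanSpace ℂ (Fin n)}
    (hχ : SolvesSchrod H μ ε₁ T χ) (hψ : SolvesSchrod H μ ε₁ T ψ)
    (hψ' : SolvesSchrod H μ ε₂ T ψ') (h0 : ψ' 0 = ψ 0) :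
    (inner ℂ (χ T) (ψ' T - ψ T)).re
      = ∫ t in (0 : ℝ)..T, (ε₂ t - ε₁ t) * (inner ℂ (χ t) (toEuclideanLin μ (ψ' t))).im := by
  have h' := hχ.re_inner_sub_re_inner hT hH hμ hε₁ hε₂ hψ'
  have h := hχ.re_inner_sub_re_inner hT hH hμ hε₁ hε₁ hψ
  simp only [sub_self, zero_mul, intervalIntegral.integral_zero] at h
  rw [h0] at h'
  rw [inner_sub_right, Complex.sub_re]
  linarith

end SchrodingerPairing

section SelectivityFunctional

variable {n : ℕ}

lemma inner_rankOne_left (ψ₁ x y : EuclideanSpace ℂ (Fin n)) :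
    inner ℂ (rankOne ψ₁ x) y = (starRingEnd ℂ) (inner ℂ ψ₁ x) * inner ℂ ψ₁ y := by
  rw [rankOne, inner_smul_left]

lemma re_inner_rankOne_self (ψ₁ x : EuclideanSpace ℂ (Fin n)) :
    (inner ℂ x (rankOne ψ₁ x)).re = Complex.normSq (inner ℂ ψ₁ x) := by
  rw [rankOne, inner_smul_right, ← inner_conj_symm x ψ₁, Complex.mul_conj, Complex.ofReal_re]

lemma Jfun_eq_normSq (T β : ℝ) (ψ₁ : EuclideanSpace ℂ (Fin n)) (ε : ℝ → ℝ)
    (ψt ψh : ℝ → EuclideanSpace ℂ (Fin n)) :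
    Jfun T β ψ₁ ε ψt ψh
      = Complex.normSq (inner ℂ ψ₁ (ψt T - ψh T)) - β * ∫ t in (0 : ℝ)..T, ε t ^ 2 := by
  rw [Jfun, re_inner_rankOne_self]

lemma normSq_inner_sub_le_four {ψ₁ x y : EuclideanSpace ℂ (Fin n)} (hψ₁ : ‖ψ₁‖ ≤ 1)
    (hx : ‖x‖ ≤ 1) (hy : ‖y‖ ≤ 1) : Complex.normSq (inner ℂ ψ₁ (x - y)) ≤ 4 := by
  have hle : ‖inner ℂ ψ₁ (x - y)‖ ≤ 2 :=
    calc ‖inner ℂ ψ₁ (x - y)‖ ≤ ‖ψ₁‖ * ‖x - y‖ := norm_inner_le_norm _ _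
      _ ≤ 1 * (1 + 1) := by gcongr; exact (norm_sub_le x y).trans (add_le_add hx hy)
      _ = 2 := by norm_num
  rw [Complex.normSq_eq_norm_sq]
  nlinarith [norm_nonneg (inner ℂ ψ₁ (x - y))]

lemma Jfun_le_four {T β : ℝ} (hT : 0 ≤ T) (hβ : 0 ≤ β) {ψ₁ : EuclideanSpace ℂ (Fin n)}
    (hψ₁ : ‖ψ₁‖ ≤ 1) (ε : ℝ → ℝ) {ψt ψh : ℝ → EuclideanSpace ℂ (Fin n)} (ht : ‖ψt T‖ ≤ 1)
    (hh : ‖ψh T‖ ≤ 1) : Jfun T β ψ₁ ε ψt ψh ≤ 4 := by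
  have hint : 0 ≤ ∫ t in (0 : ℝ)..T, ε t ^ 2 :=
    intervalIntegral.integral_nonneg hT fun t _ => sq_nonneg (ε t)
  rw [Jfun_eq_normSq]
  nlinarith [normSq_inner_sub_le_four hψ₁ ht hh]

end SelectivityFunctional

section MonotonicScheme

variable {n : ℕ} {T β : ℝ} {H μt μh : Matrix (Fin n) (Fin n) ℂ} {ψ₀ ψ₁ : EuclideanSpace ℂ (Fin n)}
  {ε ε' : ℝ → ℝ} {ψt ψh ψt' ψh' χt χh : ℝ → EuclideanSpace ℂ (Fin n)}

lemma Jfun_sub_Jfun_eq (hT : 0 ≤ T) (hH : H.IsHermitian) (hμt : μt.IsHermitian)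
    (hμh : μh.IsHermitian) (hε : Continuous ε) (hε' : Continuous ε')
    (hψt : IsSchrodSol H μt ε ψ₀ T ψt) (hψh : IsSchrodSol H μh ε ψ₀ T ψh)
    (hψt' : IsSchrodSol H μt ε' ψ₀ T ψt') (hψh' : IsSchrodSol H μh ε' ψ₀ T ψh')
    (hχt : IsSchrodAdjSol H μt ε (rankOne ψ₁ (ψt T - ψh T)) T χt)
    (hχh : IsSchrodAdjSol H μh ε (rankOne ψ₁ (ψt T - ψh T)) T χh) :
    Jfun T β ψ₁ ε' ψt' ψh' - Jfun T β ψ₁ ε ψt ψh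
      = Complex.normSq (inner ℂ ψ₁ (ψt' T - ψh' T) - inner ℂ ψ₁ (ψt T - ψh T))
        + ∫ t in (0 : ℝ)..T, (ε' t - ε t) *
            (2 * (inner ℂ (χt t) (toEuclideanLin μt (ψt' t))).im
              - 2 * (inner ℂ (χh t) (toEuclideanLin μh (ψh' t))).im - β * (ε' t + ε t)) := by
  set b := inner ℂ ψ₁ (ψt T - ψh T)
  set a := inner ℂ ψ₁ (ψt' T - ψh' T)
  have hnormSq : Complex.normSq a
      = Complex.normSq b + Complex.normSq (a - b) + 2 * ((starRingEnd ℂ) b * (a - b)).re := by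
    conv_lhs => rw [← add_sub_cancel b a, Complex.normSq_add]
    rw [← Complex.conj_re, map_mul, Complex.conj_conj, mul_comm]
  have hterminal : (starRingEnd ℂ) b * (a - b)
      = inner ℂ (χt T) (ψt' T - ψt T) - inner ℂ (χh T) (ψh' T - ψh T) := by
    rw [hχt.1, hχh.1, inner_rankOne_left, inner_rankOne_left, ← mul_sub, ← inner_sub_right,
      ← inner_sub_right]
    congr 2
    abel
  have hpair_t := SolvesSchrod.re_inner_sub_eq_integral hT hH hμt hε hε' hχt.2 hψt.2 hψt'.2
    (hψt'.1.trans hψt.1.symm)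
  have hpair_h := SolvesSchrod.re_inner_sub_eq_integral hT hH hμh hε hε' hχh.2 hψh.2 hψh'.2
    (hψh'.1.trans hψh.1.symm)
  have hδ : Continuous fun t => ε' t - ε t := hε'.sub hε
  have iFt := intervalIntegrable_mul_im_inner hT hδ μt (SolvesSchrod.continuousOn hχt.2)
    (SolvesSchrod.continuousOn hψt'.2)
  have iFh := intervalIntegrable_mul_im_inner hT hδ μh (SolvesSchrod.continuousOn hχh.2)
    (SolvesSchrod.continuousOn hψh'.2)
  have iε : IntervalIntegrable (fun t => ε t ^ 2) MeasureTheory.volume 0 T :=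
    (hε.pow 2).intervalIntegrable 0 T
  have iε' : IntervalIntegrable (fun t => ε' t ^ 2) MeasureTheory.volume 0 T :=
    (hε'.pow 2).intervalIntegrable 0 T
  rw [intervalIntegral.integral_congr (g := fun t =>
      2 * ((ε' t - ε t) * (inner ℂ (χt t) (toEuclideanLin μt (ψt' t))).im)
        - 2 * ((ε' t - ε t) * (inner ℂ (χh t) (toEuclideanLin μh (ψh' t))).im)
        - β * (ε' t ^ 2 - ε t ^ 2)) fun t _ => by ring,
    intervalIntegral.integral_sub ((iFt.const_mul 2).sub (iFh.const_mul 2))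
      ((iε'.sub iε).const_mul β),
    intervalIntegral.integral_sub (iFt.const_mul 2) (iFh.const_mul 2),
    intervalIntegral.integral_const_mul, intervalIntegral.integral_const_mul,
    intervalIntegral.integral_const_mul, intervalIntegral.integral_sub iε' iε,
    Jfun_eq_normSq, Jfun_eq_normSq, hnormSq, hterminal, Complex.sub_re, hpair_t, hpair_h]
  ring

lemma Jfun_le_Jfun_of_update (hT : 0 ≤ T) (hH : H.IsHermitian) (hμt : μt.IsHermitian)
    (hμh : μh.IsHermitian) (hε : Continuous ε) (hε' : Continuous ε') {c : ℝ} (hc : 0 ≤ c)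
    (hψt : IsSchrodSol H μt ε ψ₀ T ψt) (hψh : IsSchrodSol H μh ε ψ₀ T ψh)
    (hψt' : IsSchrodSol H μt ε' ψ₀ T ψt') (hψh' : IsSchrodSol H μh ε' ψ₀ T ψh')
    (hχt : IsSchrodAdjSol H μt ε (rankOne ψ₁ (ψt T - ψh T)) T χt)
    (hχh : IsSchrodAdjSol H μh ε (rankOne ψ₁ (ψt T - ψh T)) T χh)
    (hupdate : ∀ t ∈ Set.Icc (0 : ℝ) T, ε' t - ε t = c *
      (2 * (inner ℂ (χt t) (toEuclideanLin μt (ψt' t))).im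
        - 2 * (inner ℂ (χh t) (toEuclideanLin μh (ψh' t))).im - β * (ε' t + ε t))) :
    Jfun T β ψ₁ ε ψt ψh ≤ Jfun T β ψ₁ ε' ψt' ψh' := by
  rw [← sub_nonneg, Jfun_sub_Jfun_eq hT hH hμt hμh hε hε' hψt hψh hψt' hψh' hχt hχh]
  refine add_nonneg (Complex.normSq_nonneg _) (intervalIntegral.integral_nonneg hT fun t ht => ?_)
  rw [hupdate t ht, mul_assoc]
  exact mul_nonneg hc (mul_self_nonneg _)

end MonotonicScheme

/-- if consecutive controls in the sequence `(ε_ℓ)` satisfy the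
implicit monotonic update equation, then `(J(ε_ℓ))` is nondecreasing, bounded
above by `4`, and hence converges. -/
theorem monotonic_scheme_converges {n : ℕ} (T β θ : ℝ) (hT : 0 < T) (hβ : 0 < β)
    (hθ : 0 < θ)
    (H : Matrix (Fin n) (Fin n) ℂ) (hH : H.IsHermitian)
    (ψ₀ ψ₁ : EuclideanSpace ℂ (Fin n)) (hψ₀ : ‖ψ₀‖ = 1) (hψ₁ : ‖ψ₁‖ = 1)
    (μt μh : Matrix (Fin n) (Fin n) ℂ) (hμt : μt.IsHermitian) (hμh : μh.IsHermitian)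
    (ε : ℕ → ℝ → ℝ) (hε : ∀ ℓ, Continuous (ε ℓ))
    (ψt ψh : ℕ → ℝ → EuclideanSpace ℂ (Fin n))
    (hψt : ∀ ℓ, IsSchrodSol H μt (ε ℓ) ψ₀ T (ψt ℓ))
    (hψh : ∀ ℓ, IsSchrodSol H μh (ε ℓ) ψ₀ T (ψh ℓ))
    (χt χh : ℕ → ℝ → EuclideanSpace ℂ (Fin n))
    (hχt : ∀ ℓ, IsSchrodAdjSol H μt (ε ℓ) (rankOne ψ₁ (ψt ℓ T - ψh ℓ T)) T (χt ℓ))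
    (hχh : ∀ ℓ, IsSchrodAdjSol H μh (ε ℓ) (rankOne ψ₁ (ψt ℓ T - ψh ℓ T)) T (χh ℓ))
    (hupdate : ∀ ℓ, ∀ t ∈ Set.Icc (0 : ℝ) T,
      ε (ℓ + 1) t - ε ℓ t = (θ / β) *
          (2 * (inner ℂ (χt ℓ t) (Matrix.toEuclideanLin μt (ψt (ℓ + 1) t)) : ℂ).im
           - 2 * (inner ℂ (χh ℓ t) (Matrix.toEuclideanLin μh (ψh (ℓ + 1) t)) : ℂ).im
           - β * (ε (ℓ + 1) t + ε ℓ t))) :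
    Monotone (fun ℓ => Jfun T β ψ₁ (ε ℓ) (ψt ℓ) (ψh ℓ)) ∧
    (∀ ℓ, Jfun T β ψ₁ (ε ℓ) (ψt ℓ) (ψh ℓ) ≤ 4) ∧
    ∃ l : ℝ, Filter.Tendsto (fun ℓ => Jfun T β ψ₁ (ε ℓ) (ψt ℓ) (ψh ℓ))
      Filter.atTop (nhds l) := by
  have hmono : Monotone fun ℓ => Jfun T β ψ₁ (ε ℓ) (ψt ℓ) (ψh ℓ) :=
    monotone_nat_of_le_succ fun ℓ =>
      Jfun_le_Jfun_of_update hT.le hH hμt hμh (hε ℓ) (hε (ℓ + 1)) (div_nonneg hθ.le hβ.le)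
        (hψt ℓ) (hψh ℓ) (hψt (ℓ + 1)) (hψh (ℓ + 1)) (hχt ℓ) (hχh ℓ) (hupdate ℓ)
  have hbound : ∀ ℓ, Jfun T β ψ₁ (ε ℓ) (ψt ℓ) (ψh ℓ) ≤ 4 := fun ℓ =>
    Jfun_le_four hT.le hβ.le hψ₁.le (ε ℓ)
      ((IsSchrodSol.norm_eq hT.le hH hμt (hε ℓ) (hψt ℓ)).trans hψ₀).le
      ((IsSchrodSol.norm_eq hT.le hH hμh (hε ℓ) (hψh ℓ)).trans hψ₀).le
  refine ⟨hmono, hbound, _, tendsto_atTop_ciSup hmono ⟨4, ?_⟩⟩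
  rintro _ ⟨ℓ, rfl⟩
  exact hbound ℓ
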